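/- arXiv:1101.0826 — 5 statements merged into one kernel-verified Lean document; each statement's English description precedes it below -/
import Mathlib

section
/- Let I ⊆ ℝ[x₁,…,xₙ] be an ideal and A = ℝ[x₁,…,xₙ]/I. If f ∈ A is a sum of squares in A (i.e., f = Σᵢ hᵢ² for some h₁,…,h_r ∈ A), then f is strongly nonnegative on V(I), that is, strongly nonnegative at every point P ∈ V_ℝ(I). -/
open MvPolynomial Polynomial

noncomputable section

/-- The ring `ℝ[ε]/(ε^m)`. -/
abbrev Eps (m : ℕ) : Type := AdjoinRoot ((Polynomial.X : Polynomial ℝ) ^ m)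

/-- An element `a₀ + a₁ε + ⋯ + a_{m-1}ε^{m-1}` of `ℝ[ε]/(ε^m)` is nonnegative if it is zero
or `a_N > 0` where `N = min {j : a_j ≠ 0}` (equivalently some, or any, polynomial
representative of it has positive lowest-order nonzero coefficient). -/
def EpsNonneg {m : ℕ} (z : Eps m) : Prop :=
  z = 0 ∨ ∃ p : Polynomial ℝ, AdjoinRoot.mk _ p = z ∧ 0 < p.coeff p.natTrailingDegree

/-- The real vanishing set `V_ℝ(I) ⊆ ℝⁿ` of an ideal `I ⊆ ℝ[x₁,…,xₙ]`. -/
def realVariety {n : ℕ} (I : Ideal (MvPolynomial (Fin n) ℝ)) : Set (Fin n → ℝ) :=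
  {P | ∀ p ∈ I, MvPolynomial.eval P p = 0}

/-- An `ℝ`-algebra homomorphism `φ : A → ℝ[ε]/(ε^m)` is at `P` if composing it with the
unique `ℝ`-algebra homomorphism `ℝ[ε]/(ε^m) → ℝ` gives evaluation at `P`; i.e. for every `p`,
`φ(p mod I)` agrees with `eval P p` modulo the ideal `(ε)`. -/
def AtPoint {n m : ℕ} (I : Ideal (MvPolynomial (Fin n) ℝ)) (P : Fin n → ℝ)
    (φ : (MvPolynomial (Fin n) ℝ ⧸ I) →ₐ[ℝ] Eps m) : Prop :=
  ∀ p : MvPolynomial (Fin n) ℝ,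
    φ (Ideal.Quotient.mk I p) - algebraMap ℝ (Eps m) (MvPolynomial.eval P p)
      ∈ Ideal.span {AdjoinRoot.root ((Polynomial.X : Polynomial ℝ) ^ m)}

/-- `f ∈ A = ℝ[x₁,…,xₙ]/I` is strongly nonnegative at `P` if for every `m` and every
`ℝ`-algebra homomorphism `φ : A → ℝ[ε]/(ε^m)` at `P`, `φ(f)` is nonnegative. -/
def StronglyNonnegAt {n : ℕ} (I : Ideal (MvPolynomial (Fin n) ℝ)) (P : Fin n → ℝ)
    (f : MvPolynomial (Fin n) ℝ ⧸ I) : Prop :=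
  ∀ (m : ℕ) (φ : (MvPolynomial (Fin n) ℝ ⧸ I) →ₐ[ℝ] Eps m),
    AtPoint I P φ → EpsNonneg (φ f)

/-- `f` is strongly nonnegative on `V(I)` if it is strongly nonnegative at every `P ∈ V_ℝ(I)`. -/
def StronglyNonneg {n : ℕ} (I : Ideal (MvPolynomial (Fin n) ℝ))
    (f : MvPolynomial (Fin n) ℝ ⧸ I) : Prop :=
  ∀ P ∈ realVariety I, StronglyNonnegAt I P f

/-- `f` is `k`-sos modulo `I`: `f ≡ Σᵢ gᵢ² (mod I)` with each `deg gᵢ ≤ k`. -/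
def KSosMod {n : ℕ} (I : Ideal (MvPolynomial (Fin n) ℝ)) (k : ℕ)
    (f : MvPolynomial (Fin n) ℝ) : Prop :=
  ∃ (r : ℕ) (g : Fin r → MvPolynomial (Fin n) ℝ),
    (∀ i, (g i).totalDegree ≤ k) ∧ f - ∑ i, (g i) ^ 2 ∈ I

/-- `f` is a sum of squares modulo `I` (no degree bound). -/
def SosMod {n : ℕ} (I : Ideal (MvPolynomial (Fin n) ℝ)) (f : MvPolynomial (Fin n) ℝ) : Prop :=
  ∃ (r : ℕ) (g : Fin r → MvPolynomial (Fin n) ℝ), f - ∑ i, (g i) ^ 2 ∈ I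

/-- `I` is `(d,k)`-sos: every polynomial of degree at most `d` which is nonnegative on
`V_ℝ(I)` is `k`-sos modulo `I`. -/
def IsDKSos {n : ℕ} (I : Ideal (MvPolynomial (Fin n) ℝ)) (d k : ℕ) : Prop :=
  ∀ f : MvPolynomial (Fin n) ℝ, f.totalDegree ≤ d →
    (∀ P ∈ realVariety I, 0 ≤ MvPolynomial.eval P f) → KSosMod I k f

/-- `I` is weakly `(1,k)`-sos: every polynomial of degree at most `1` whose image in
`A = ℝ[x]/I` is strongly nonnegative on `V(I)` is `k`-sos modulo `I`. -/
def WeaklyOneKSos {n : ℕ} (I : Ideal (MvPolynomial (Fin n) ℝ)) (k : ℕ) : Prop :=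
  ∀ f : MvPolynomial (Fin n) ℝ, f.totalDegree ≤ 1 →
    StronglyNonneg I (Ideal.Quotient.mk I f) → KSosMod I k f

/-- The maximal ideal `m_P ⊆ A = ℝ[x]/I` of functions vanishing at `P`. -/
def mIdeal {n : ℕ} (I : Ideal (MvPolynomial (Fin n) ℝ)) (P : Fin n → ℝ) :
    Ideal (MvPolynomial (Fin n) ℝ ⧸ I) :=
  Ideal.map (Ideal.Quotient.mk I) (RingHom.ker (MvPolynomial.eval P))

/-- A commutative ring is a regular local ring if it is Noetherian, local, and the dimension
of its cotangent space (equivalently, of its tangent space) over the residue field equals its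
Krull dimension. -/
def IsRegularLocal (R : Type) [CommRing R] : Prop :=
  IsNoetherianRing R ∧ ∃ _h : IsLocalRing R,
    (Module.finrank (IsLocalRing.ResidueField R) (IsLocalRing.CotangentSpace R) :
      WithBot (WithTop ℕ)) = ringKrullDim R

/-- `V(I)` is nonsingular at `P` if the localization of `A = ℝ[x]/I` at the maximal ideal
`m_P` is a regular local ring. -/
def IsNonsingularAt {n : ℕ} (I : Ideal (MvPolynomial (Fin n) ℝ)) (P : Fin n → ℝ) : Prop :=
  ∃ hp : (mIdeal I P).IsPrime, IsRegularLocal (@Localization.AtPrime _ _ (mIdeal I P) hp)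

/-- The tangent space of `V(I)` at `P`, viewed as the set of vectors `v ∈ ℝⁿ` such that there
is an `ℝ`-algebra homomorphism `A → ℝ[ε]/(ε²)` at `P` sending each `xᵢ` to `Pᵢ + vᵢ ε`. -/
def tangentVectors {n : ℕ} (I : Ideal (MvPolynomial (Fin n) ℝ)) (P : Fin n → ℝ) :
    Set (Fin n → ℝ) :=
  {v | ∃ φ : (MvPolynomial (Fin n) ℝ ⧸ I) →ₐ[ℝ] Eps 2,
    ∀ i : Fin n, φ (Ideal.Quotient.mk I (MvPolynomial.X i)) =
      algebraMap ℝ (Eps 2) (P i) + (v i) • AdjoinRoot.root ((Polynomial.X : Polynomial ℝ) ^ 2)}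

/-- `P ∈ V_ℝ(I)` is convex-singular: `P` is a singular point of `V(I)`, lies on the relative
boundary of `conv(V_ℝ(I))`, and the (affine) tangent space at `P` meets the relative interior
of `conv(V_ℝ(I))`. -/
def ConvexSingular {n : ℕ} (I : Ideal (MvPolynomial (Fin n) ℝ)) (P : Fin n → ℝ) : Prop :=
  ¬ IsNonsingularAt I P ∧
  P ∈ intrinsicFrontier ℝ (convexHull ℝ (realVariety I)) ∧
  ∃ v ∈ tangentVectors I P, P + v ∈ intrinsicInterior ℝ (convexHull ℝ (realVariety I))

/-- The `k`-th theta body of `I`. -/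
def thetaBody {n : ℕ} (I : Ideal (MvPolynomial (Fin n) ℝ)) (k : ℕ) : Set (Fin n → ℝ) :=
  {x | ∀ f : MvPolynomial (Fin n) ℝ, f.totalDegree ≤ 1 → KSosMod I k f →
    0 ≤ MvPolynomial.eval x f}

/-- `I` is `TH_k`-exact if the `k`-th theta body equals the closure of the convex hull of
`V_ℝ(I)`. -/
def ThetaExact {n : ℕ} (I : Ideal (MvPolynomial (Fin n) ℝ)) (k : ℕ) : Prop :=
  thetaBody I k = closure (convexHull ℝ (realVariety I))

/-- `I` is real radical: whenever `f^(2m) + Σᵢ gᵢ² ∈ I` for some `m ≥ 1`, we have `f ∈ I`. -/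
def IsRealRadical {n : ℕ} (I : Ideal (MvPolynomial (Fin n) ℝ)) : Prop :=
  ∀ f : MvPolynomial (Fin n) ℝ,
    (∃ m : ℕ, 1 ≤ m ∧ ∃ (r : ℕ) (g : Fin r → MvPolynomial (Fin n) ℝ),
      f ^ (2 * m) + ∑ i, (g i) ^ 2 ∈ I) → f ∈ I

/-- A formal power series is nonnegative if it is zero or its leading (lowest-order nonzero)
coefficient is positive. -/
def PSNonneg (F : PowerSeries ℝ) : Prop :=
  F = 0 ∨ ∃ N : ℕ, 0 < PowerSeries.coeff N F ∧ ∀ j < N, PowerSeries.coeff j F = 0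

/-- An `ℝ`-algebra homomorphism `φ : A → ℝ[[t]]` is at `P` if the preimage of the ideal `(t)`
is the maximal ideal of functions vanishing at `P`. -/
def PSAtPoint {n : ℕ} (I : Ideal (MvPolynomial (Fin n) ℝ)) (P : Fin n → ℝ)
    (φ : (MvPolynomial (Fin n) ℝ ⧸ I) →ₐ[ℝ] PowerSeries ℝ) : Prop :=
  ∀ p : MvPolynomial (Fin n) ℝ,
    (PowerSeries.constantCoeff (φ (Ideal.Quotient.mk I p)) = 0 ↔ MvPolynomial.eval P p = 0)

/-- The linear function induced by a polynomial `f` (of degree at most 1) on tangent vectors: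
`v ↦ Σᵢ (∂f/∂xᵢ) vᵢ`. -/
def linGrad {n : ℕ} (f : MvPolynomial (Fin n) ℝ) (v : Fin n → ℝ) : ℝ :=
  ∑ i : Fin n, MvPolynomial.eval (0 : Fin n → ℝ) (MvPolynomial.pderiv i f) * v i

end

/-!
Over an ordered ring, the polynomials whose lowest-order coefficient is nonnegative are closed
under addition and contain every square, so every sum of squares in `ℝ[ε]` is nonnegative in
this sense. An algebra map `φ : A → ℝ[ε]/(ε^m)` sends a sum of squares to a sum of squares,
and such a sum lifts to a sum of squares in `ℝ[ε]`, which is a representative witnessing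
nonnegativity.
-/

theorem Polynomial.trailingCoeff_add_nonneg {R : Type*} [Ring R] [PartialOrder R]
    [IsOrderedAddMonoid R] {p q : R[X]} (hp : 0 ≤ p.trailingCoeff) (hq : 0 ≤ q.trailingCoeff) :
    0 ≤ (p + q).trailingCoeff := by
  wlog hpq : p.natTrailingDegree ≤ q.natTrailingDegree generalizing p q
  · rw [add_comm]
    exact this hq hp (le_of_not_ge hpq)
  rcases eq_or_ne p 0 with rfl | hp0
  · simpa using hq
  have hlow : ∀ k < p.natTrailingDegree, (p + q).coeff k = 0 := fun k hk => by
    rw [coeff_add, coeff_eq_zero_of_lt_natTrailingDegree hk,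
      coeff_eq_zero_of_lt_natTrailingDegree (hk.trans_le hpq), add_zero]
  have hpos : 0 < (p + q).coeff p.natTrailingDegree := by
    rw [coeff_add]
    refine add_pos_of_pos_of_nonneg (hp.lt_of_ne' (trailingCoeff_nonzero_iff_nonzero.2 hp0)) ?_
    rcases hpq.lt_or_eq with hlt | heq
    · rw [coeff_eq_zero_of_lt_natTrailingDegree hlt]
    · rwa [heq]
  have hsum : p + q ≠ 0 := by
    rintro hzero
    simp [hzero] at hpos
  have hdeg : (p + q).natTrailingDegree = p.natTrailingDegree :=
    le_antisymm (natTrailingDegree_le_of_ne_zero hpos.ne') (le_natTrailingDegree hsum hlow)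
  rw [trailingCoeff, hdeg]
  exact hpos.le

theorem IsSumSq.trailingCoeff_nonneg {R : Type*} [CommRing R] [LinearOrder R]
    [IsStrictOrderedRing R] {p : R[X]} (hp : IsSumSq p) : 0 ≤ p.trailingCoeff := by
  induction hp with
  | zero => simp
  | sq_add a _ ih =>
    refine trailingCoeff_add_nonneg ?_ ih
    rw [trailingCoeff_mul]
    exact mul_self_nonneg _

theorem IsSumSq.map {R S F : Type*} [Semiring R] [Semiring S] [FunLike F R S] [RingHomClass F R S]
    (f : F) {s : R} (hs : IsSumSq s) : IsSumSq (f s) := by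
  induction hs with
  | zero => simp
  | sq_add a _ ih => simpa using ih.sq_add (f a)

theorem IsSumSq.exists_isSumSq_of_surjective {R S F : Type*} [Semiring R] [Semiring S]
    [FunLike F R S] [RingHomClass F R S] {f : F} (hf : Function.Surjective f) {s : S}
    (hs : IsSumSq s) : ∃ r, IsSumSq r ∧ f r = s := by
  induction hs with
  | zero => exact ⟨0, .zero, map_zero f⟩
  | sq_add a _ ih =>
    obtain ⟨r, hr, rfl⟩ := ih
    obtain ⟨b, rfl⟩ := hf a
    exact ⟨b * b + r, hr.sq_add b, by simp⟩

theorem epsNonneg_of_isSumSq {m : ℕ} {z : Eps m} (hz : IsSumSq z) : EpsNonneg z := by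
  obtain ⟨p, hp, rfl⟩ := hz.exists_isSumSq_of_surjective AdjoinRoot.mk_surjective
  rcases eq_or_ne p 0 with rfl | hp0
  · exact .inl (map_zero _)
  · exact .inr ⟨p, rfl,
      hp.trailingCoeff_nonneg.lt_of_ne' (trailingCoeff_nonzero_iff_nonzero.2 hp0)⟩

/-- If `f ∈ A = ℝ[x₁,…,xₙ]/I` is a sum of squares in `A`, then `f` is strongly nonnegative
on `V(I)`, i.e. strongly nonnegative at every point of `V_ℝ(I)`. -/
theorem sum_of_squares_stronglyNonneg {n : ℕ} (I : Ideal (MvPolynomial (Fin n) ℝ))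
    (f : MvPolynomial (Fin n) ℝ ⧸ I) (r : ℕ) (h : Fin r → MvPolynomial (Fin n) ℝ ⧸ I)
    (hf : f = ∑ i, (h i) ^ 2) :
    StronglyNonneg I f := by
  intro P _ m φ _
  rw [hf]
  exact epsNonneg_of_isSumSq ((IsSumSq.sum_sq _ h).map φ)
end

section
/- Let I ⊆ ℝ[x₁,…,xₙ] be an ideal and d ≥ 1. If there exists a polynomial f ∈ ℝ[x₁,…,xₙ] of degree at most d which is nonnegative on V_ℝ(I) but whose image in A = ℝ[x₁,…,xₙ]/I is not strongly nonnegative on V(I), then I is not (d,k)-sos for any k ≥ 1. -/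
open MvPolynomial Polynomial

/-!
A representation `f ≡ Σ gᵢ² (mod I)` is carried by every `φ : A → ℝ[ε]/(ε^m)` to a sum of
squares in `ℝ[ε]/(ε^m)`. Lifting to `ℝ[ε]`, the lowest-order terms of the squares have positive
coefficients and cannot cancel, so a nonzero sum of squares is nonnegative. Hence an `f` that is
not strongly nonnegative is not a sum of squares modulo `I` at all, whatever the degree bound.
-/

namespace Polynomial

variable {R : Type*}

theorem trailingCoeff_add_nonneg_s6 [Semiring R] [LinearOrder R] [IsStrictOrderedRing R]
    {a b : R[X]} (ha : 0 ≤ a.trailingCoeff) (hb : 0 ≤ b.trailingCoeff) :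
    0 ≤ (a + b).trailingCoeff := by
  wlog hab : a.natTrailingDegree ≤ b.natTrailingDegree generalizing a b
  · rw [add_comm]
    exact this hb ha (le_of_not_ge hab)
  rcases eq_or_ne a 0 with rfl | ha0
  · simpa using hb
  set t := a.natTrailingDegree
  have hlow : ∀ j < t, (a + b).coeff j = 0 := fun j hj => by
    rw [coeff_add, coeff_eq_zero_of_lt_natTrailingDegree hj,
      coeff_eq_zero_of_lt_natTrailingDegree (hj.trans_le hab), add_zero]
  have hat : 0 < a.coeff t := ha.lt_of_ne' (trailingCoeff_nonzero_iff_nonzero.mpr ha0)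
  have hbt : 0 ≤ b.coeff t := by
    rcases hab.lt_or_eq with h | h
    · rw [coeff_eq_zero_of_lt_natTrailingDegree h]
    · rw [h]
      exact hb
  have hpos : 0 < (a + b).coeff t := by
    rw [coeff_add]
    exact add_pos_of_pos_of_nonneg hat hbt
  have hdeg : (a + b).natTrailingDegree = t :=
    (natTrailingDegree_le_of_ne_zero hpos.ne').antisymm
      (le_natTrailingDegree (fun h => hpos.ne' (by rw [h, coeff_zero])) hlow)
  rw [trailingCoeff, hdeg]
  exact hpos.le

theorem trailingCoeff_sq_nonneg [CommRing R] [LinearOrder R] [IsStrictOrderedRing R]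
    (p : R[X]) : 0 ≤ (p ^ 2).trailingCoeff := by
  rw [sq, trailingCoeff_mul]
  exact mul_self_nonneg _

theorem trailingCoeff_sum_sq_nonneg [CommRing R] [LinearOrder R] [IsStrictOrderedRing R]
    {ι : Type*} (s : Finset ι) (p : ι → R[X]) : 0 ≤ (∑ i ∈ s, p i ^ 2).trailingCoeff :=
  Finset.sum_induction _ (fun q : R[X] => 0 ≤ q.trailingCoeff)
    (fun _ _ => trailingCoeff_add_nonneg_s6) (by simp) fun i _ => trailingCoeff_sq_nonneg (p i)

end Polynomial

theorem epsNonneg_mk_of_trailingCoeff_nonneg {m : ℕ} {q : ℝ[X]} (hq : 0 ≤ q.trailingCoeff) :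
    EpsNonneg (AdjoinRoot.mk _ q : Eps m) := by
  rcases eq_or_ne (AdjoinRoot.mk _ q : Eps m) 0 with h | h
  · exact Or.inl h
  · have hq0 : q ≠ 0 := by
      rintro rfl
      exact h (map_zero _)
    exact Or.inr ⟨q, rfl, hq.lt_of_ne' (trailingCoeff_nonzero_iff_nonzero.mpr hq0)⟩

theorem epsNonneg_sum_sq {m : ℕ} {ι : Type*} (s : Finset ι) (z : ι → Eps m) :
    EpsNonneg (∑ i ∈ s, z i ^ 2) := by
  choose p hp using fun i => AdjoinRoot.mk_surjective (z i)
  have hmk : (AdjoinRoot.mk _ (∑ i ∈ s, p i ^ 2) : Eps m) = ∑ i ∈ s, z i ^ 2 := by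
    simp only [map_sum, map_pow, hp]
  rw [← hmk]
  exact epsNonneg_mk_of_trailingCoeff_nonneg (trailingCoeff_sum_sq_nonneg s p)

theorem KSosMod.sosMod {n k : ℕ} {I : Ideal (MvPolynomial (Fin n) ℝ)}
    {f : MvPolynomial (Fin n) ℝ} (h : KSosMod I k f) : SosMod I f :=
  let ⟨r, g, _, hmem⟩ := h
  ⟨r, g, hmem⟩

theorem SosMod.stronglyNonneg {n : ℕ} {I : Ideal (MvPolynomial (Fin n) ℝ)}
    {f : MvPolynomial (Fin n) ℝ} (h : SosMod I f) :
    StronglyNonneg I (Ideal.Quotient.mk I f) := by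
  obtain ⟨r, g, hmem⟩ := h
  intro P _ m φ _
  rw [Ideal.Quotient.mk_eq_mk_iff_sub_mem _ _ |>.mpr hmem]
  simp only [map_sum, map_pow]
  exact epsNonneg_sum_sq _ _

theorem not_dksos_of_not_stronglyNonneg_general {n : ℕ} (I : Ideal (MvPolynomial (Fin n) ℝ))
    (d : ℕ) (f : MvPolynomial (Fin n) ℝ) (hdeg : f.totalDegree ≤ d)
    (hnn : ∀ P ∈ realVariety I, 0 ≤ MvPolynomial.eval P f)
    (hns : ¬ StronglyNonneg I (Ideal.Quotient.mk I f)) :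
    ∀ k : ℕ, 1 ≤ k → ¬ IsDKSos I d k :=
  fun _ _ hsos => hns (hsos f hdeg hnn).sosMod.stronglyNonneg

/-- If some `f` of degree at most `d` is nonnegative on `V_ℝ(I)` but not strongly
nonnegative on `V(I)`, then `I` is not `(d,k)`-sos for any `k ≥ 1`. -/
theorem not_dksos_of_not_stronglyNonneg {n : ℕ} (I : Ideal (MvPolynomial (Fin n) ℝ))
    (d : ℕ) (hd : 1 ≤ d) (f : MvPolynomial (Fin n) ℝ) (hdeg : f.totalDegree ≤ d)
    (hnn : ∀ P ∈ realVariety I, 0 ≤ MvPolynomial.eval P f)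
    (hns : ¬ StronglyNonneg I (Ideal.Quotient.mk I f)) :
    ∀ k : ℕ, 1 ≤ k → ¬ IsDKSos I d k :=
  not_dksos_of_not_stronglyNonneg_general I d f hdeg hnn hns
end

section
/- Let I ⊆ ℝ[x₁,…,xₙ] be an ideal and k ≥ 1. If I is weakly (1,k)-sos, then I is TH_k-exact. -/
open MvPolynomial Polynomial

/-!
`TH_k(I)` is cut out by the half-spaces `f ≥ 0` for affine `k`-sos `f`, each of which contains
`V_ℝ(I)`; so it is a closed convex set containing `V_ℝ(I)`. Conversely, a point outside the closed
convex hull of `V_ℝ(I)` is strictly separated from it by an affine `f` that is positive on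
`V_ℝ(I)`. Any map `A → ℝ[ε]/(ε^m)` at a real point `P` sends `f` to an element with constant term
`f(P) > 0`, so `f` is strongly nonnegative, hence `k`-sos by hypothesis, and it cuts the point out
of `TH_k(I)`.
-/

namespace MvPolynomial

variable {σ R : Type*} [Fintype σ]

theorem eval_eq_coeff_zero_add_sum_of_totalDegree_le_one [CommSemiring R] {f : MvPolynomial σ R}
    (hf : f.totalDegree ≤ 1) (y : σ → R) :
    eval y f = coeff 0 f + ∑ i, coeff (Finsupp.single i 1) f * y i := by
  classical
  have hsupport : f.support ⊆ insert 0 (Finset.univ.image fun i => Finsupp.single i 1) := by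
    intro d hd
    rcases Nat.le_one_iff_eq_zero_or_eq_one.1 ((le_totalDegree hd).trans hf) with h | h
    · simp [(Finsupp.degree_eq_zero_iff d).1 h]
    · obtain ⟨i, rfl⟩ := (Finsupp.sum_eq_one_iff d).1 h
      exact Finset.mem_insert_of_mem (Finset.mem_image_of_mem _ (Finset.mem_univ i))
  have hzero : (0 : σ →₀ ℕ) ∉ Finset.univ.image fun i => Finsupp.single i 1 := by
    simp [eq_comm]
  rw [eval_eq', Finset.sum_subset hsupport fun d _ hd => by rw [notMem_support_iff.1 hd, zero_mul],
    Finset.sum_insert hzero,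
    Finset.sum_image fun i _ j _ hij => Finsupp.single_left_injective one_ne_zero hij]
  simp [Finsupp.single_apply, pow_ite]

variable [CommRing R]

theorem eval_smul_add_smul_of_totalDegree_le_one {f : MvPolynomial σ R} (hf : f.totalDegree ≤ 1)
    {a b : R} (hab : a + b = 1) (x y : σ → R) :
    eval (a • x + b • y) f = a * eval x f + b * eval y f := by
  have hterm (i : σ) : coeff (Finsupp.single i 1) f * (a • x + b • y) i =
      a * (coeff (Finsupp.single i 1) f * x i) + b * (coeff (Finsupp.single i 1) f * y i) := by
    simp only [Pi.add_apply, Pi.smul_apply, smul_eq_mul]; ring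
  simp only [eval_eq_coeff_zero_add_sum_of_totalDegree_le_one hf, hterm, Finset.sum_add_distrib,
    ← Finset.mul_sum]
  linear_combination -coeff 0 f * hab

theorem convex_setOf_eval_nonneg [PartialOrder R] [IsOrderedRing R] {f : MvPolynomial σ R}
    (hf : f.totalDegree ≤ 1) : Convex R {x | 0 ≤ eval x f} := by
  intro x hx y hy a b ha hb hab
  simp only [Set.mem_ofPred_eq, eval_smul_add_smul_of_totalDegree_le_one hf hab] at hx hy ⊢
  positivity

theorem exists_totalDegree_le_one_eval_eq_sub (ℓ : (σ → R) →ₗ[R] R) (u : R) :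
    ∃ F : MvPolynomial σ R, F.totalDegree ≤ 1 ∧ ∀ y, eval y F = ℓ y - u := by
  classical
  refine ⟨∑ i, C (ℓ fun j => if i = j then 1 else 0) * X i - C u, ?_, fun y => ?_⟩
  · have hlin : (∑ i, C (ℓ fun j => if i = j then 1 else 0) * X i :
        MvPolynomial σ R).IsHomogeneous 1 :=
      IsHomogeneous.sum _ _ _ fun i _ => (isHomogeneous_X R i).C_mul _
    exact (totalDegree_sub_C_le _ _).trans hlin.totalDegree_le
  · simp [ℓ.pi_apply_eq_sum_univ y, mul_comm]

end MvPolynomial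

theorem KSosMod.eval_nonneg {n : ℕ} {I : Ideal (MvPolynomial (Fin n) ℝ)} {k : ℕ}
    {f : MvPolynomial (Fin n) ℝ} (hf : KSosMod I k f) {P : Fin n → ℝ} (hP : P ∈ realVariety I) :
    0 ≤ MvPolynomial.eval P f := by
  obtain ⟨r, g, -, hmem⟩ := hf
  have hfP := hP _ hmem
  rw [map_sub, sub_eq_zero] at hfP
  rw [hfP, map_sum]
  exact Finset.sum_nonneg fun i _ => by rw [map_pow]; positivity

section ThetaBody

variable {n : ℕ} (I : Ideal (MvPolynomial (Fin n) ℝ)) (k : ℕ)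

theorem realVariety_subset_thetaBody : realVariety I ⊆ thetaBody I k :=
  fun _ hP _ _ hsos => hsos.eval_nonneg hP

theorem convex_thetaBody : Convex ℝ (thetaBody I k) :=
  fun _ hx _ hy _ _ ha hb hab f hf hsos =>
    MvPolynomial.convex_setOf_eval_nonneg hf (hx f hf hsos) (hy f hf hsos) ha hb hab

theorem isClosed_thetaBody : IsClosed (thetaBody I k) := by
  simp only [thetaBody, Set.ofPred_forall]
  exact isClosed_iInter fun f => isClosed_iInter fun _ => isClosed_iInter fun _ =>
    isClosed_le continuous_const (MvPolynomial.continuous_eval f)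

theorem closure_convexHull_realVariety_subset_thetaBody :
    closure (convexHull ℝ (realVariety I)) ⊆ thetaBody I k :=
  closure_minimal (convexHull_min (realVariety_subset_thetaBody I k) (convex_thetaBody I k))
    (isClosed_thetaBody I k)

end ThetaBody

namespace Eps

variable {m : ℕ}

noncomputable def constCoeff (hm : m ≠ 0) : Eps m →ₐ[ℝ] ℝ :=
  AdjoinRoot.liftAlgHom _ (Algebra.ofId ℝ ℝ) 0 (by simp [hm])

theorem constCoeff_mk (hm : m ≠ 0) (q : Polynomial ℝ) :
    constCoeff hm (AdjoinRoot.mk _ q) = q.coeff 0 := by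
  simp [constCoeff, Polynomial.coeff_zero_eq_eval_zero, Polynomial.eval₂_eq_eval_map]

theorem constCoeff_eq_zero_of_mem_span_root (hm : m ≠ 0) {z : Eps m}
    (hz : z ∈ Ideal.span {AdjoinRoot.root ((Polynomial.X : Polynomial ℝ) ^ m)}) :
    constCoeff hm z = 0 := by
  obtain ⟨w, rfl⟩ := Ideal.mem_span_singleton'.1 hz
  simp [constCoeff]

end Eps

theorem epsNonneg_of_sub_algebraMap_mem_span_root {m : ℕ} {z : Eps m} {c : ℝ} (hc : 0 < c)
    (hz : z - algebraMap ℝ (Eps m) c ∈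
      Ideal.span {AdjoinRoot.root ((Polynomial.X : Polynomial ℝ) ^ m)}) :
    EpsNonneg z := by
  rcases eq_or_ne m 0 with rfl | hm
  · left
    have h10 : (1 : Eps 0) = 0 := by
      have hself := AdjoinRoot.mk_self (f := (Polynomial.X : Polynomial ℝ) ^ 0)
      rwa [pow_zero, map_one] at hself
    exact (subsingleton_of_zero_eq_one h10.symm).elim _ _
  · right
    obtain ⟨q, rfl⟩ := AdjoinRoot.mk_surjective z
    have hq : q.coeff 0 = c := by
      have hconst := Eps.constCoeff_eq_zero_of_mem_span_root hm hz
      rwa [map_sub, AlgHom.commutes, Eps.constCoeff_mk, Algebra.algebraMap_self, RingHom.id_apply,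
        sub_eq_zero] at hconst
    have htrail : q.natTrailingDegree = 0 :=
      Polynomial.natTrailingDegree_eq_zero.2 (Or.inr (hq ▸ hc.ne'))
    exact ⟨q, rfl, by rwa [htrail, hq]⟩

theorem stronglyNonneg_of_forall_eval_pos {n : ℕ} {I : Ideal (MvPolynomial (Fin n) ℝ)}
    {f : MvPolynomial (Fin n) ℝ} (hf : ∀ P ∈ realVariety I, 0 < MvPolynomial.eval P f) :
    StronglyNonneg I (Ideal.Quotient.mk I f) :=
  fun P hP _ _ hφ => epsNonneg_of_sub_algebraMap_mem_span_root (hf P hP) (hφ f)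

theorem thetaExact_of_weaklyOneKSos_general {n : ℕ} (I : Ideal (MvPolynomial (Fin n) ℝ))
    (k : ℕ) (h : WeaklyOneKSos I k) : ThetaExact I k := by
  refine Set.Subset.antisymm (fun x hx => ?_) (closure_convexHull_realVariety_subset_thetaBody I k)
  by_contra hxK
  obtain ⟨L, u, hLx, hLK⟩ := geometric_hahn_banach_point_closed
    (convex_convexHull ℝ (realVariety I)).closure isClosed_closure hxK
  obtain ⟨F, hFdeg, hF⟩ := MvPolynomial.exists_totalDegree_le_one_eval_eq_sub L.toLinearMap u
  have hFpos : ∀ P ∈ realVariety I, 0 < MvPolynomial.eval P F := fun P hP => by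
    simpa [hF] using hLK P (subset_closure (subset_convexHull ℝ _ hP))
  have hFx := hx F hFdeg (h F hFdeg (stronglyNonneg_of_forall_eval_pos hFpos))
  rw [hF] at hFx
  exact (sub_nonneg.1 hFx).not_gt hLx

/-- If `I` is weakly `(1,k)`-sos, then `I` is `TH_k`-exact. -/
theorem thetaExact_of_weaklyOneKSos {n : ℕ} (I : Ideal (MvPolynomial (Fin n) ℝ))
    (k : ℕ) (hk : 1 ≤ k) (h : WeaklyOneKSos I k) : ThetaExact I k :=
  thetaExact_of_weaklyOneKSos_general I k h
end

section
/- Let I ⊆ ℝ[x₁,…,xₙ] be an ideal and suppose P ∈ V_ℝ(I) is convex-singular. Then there exists a polynomial f of degree at most 1 which is nonnegative on V_ℝ(I), satisfies f(P) = 0, and induces a nonzero linear function on the tangent space of V(I) at P; in particular there is a tangent vector v to V(I) at P on which the linear part of f is negative. -/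
open MvPolynomial Polynomial

/-!
`P` lies on the relative boundary of the convex set `K = conv(V_ℝ(I))` while `P + v` lies in its
relative interior for some tangent vector `v`. A supporting hyperplane of `K` at `P` gives an
affine `f ≥ 0` on `K` with `f(P) = 0` and `f(P + v) > 0`, so the linear part of `f` is positive
at `v`; since the tangent space is closed under `v ↦ -v`, it is negative at `-v`.
-/

theorem Convex.exists_forall_le_of_notMem_interior {E : Type*} [AddCommGroup E] [Module ℝ E]
    [TopologicalSpace E] [IsTopologicalAddGroup E] [ContinuousSMul ℝ E] [LocallyConvexSpace ℝ E]
    {C : Set E} (hC : Convex ℝ C) {x y : E} (hx : x ∉ interior C) (hy : y ∈ interior C) :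
    ∃ f : StrongDual ℝ E, (∀ a ∈ C, f x ≤ f a) ∧ f x < f y := by
  obtain ⟨f, hf⟩ := geometric_hahn_banach_point_open hC.interior isOpen_interior hx
  have hC_sub : C ⊆ closure (interior C) :=
    (hC.closure_interior_eq_closure_of_nonempty_interior ⟨y, hy⟩).symm ▸ subset_closure
  refine ⟨f, fun a ha => ?_, hf y hy⟩
  exact closure_minimal (fun b hb => (hf b hb).le) (isClosed_le continuous_const f.continuous)
    (hC_sub ha)

theorem Convex.exists_forall_le_of_notMem_intrinsicInterior {E : Type*} [NormedAddCommGroup E]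
    [NormedSpace ℝ E] {K : Set E} (hK : Convex ℝ K) {x y : E} (hxK : x ∈ affineSpan ℝ K)
    (hx : x ∉ intrinsicInterior ℝ K) (hy : y ∈ intrinsicInterior ℝ K) :
    ∃ g : StrongDual ℝ E, (∀ a ∈ K, g x ≤ g a) ∧ g x < g y := by
  obtain ⟨y', hy', rfl⟩ := hy
  have : Nonempty (affineSpan ℝ K) := ⟨y'⟩
  -- Identify `affineSpan ℝ K` with its direction, `y` becoming the origin; there the intrinsic
  -- interior of `K` is an honest interior, and a separating functional extends by Hahn–Banach.
  let e := AffineIsometryEquiv.vaddConst ℝ y'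
  let C : Set (affineSpan ℝ K).direction := e ⁻¹' ((↑) ⁻¹' K)
  have hC : Convex ℝ C := hK.affine_preimage ((affineSpan ℝ K).subtype.comp e.toAffineMap)
  have hint : interior C = e ⁻¹' interior ((↑) ⁻¹' K) :=
    (e.toHomeomorph.preimage_interior _).symm
  obtain ⟨f, hfC, hf0⟩ := hC.exists_forall_le_of_notMem_interior (x := e.symm ⟨x, hxK⟩) (y := 0)
    (by rw [hint]; simpa [e] using fun h => hx ⟨_, h, rfl⟩) (by rw [hint]; simpa [e] using hy')
  obtain ⟨g, hg, -⟩ := exists_extension_norm_eq (affineSpan ℝ K).direction f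
  have hgf : ∀ a (ha : a ∈ affineSpan ℝ K), g (a - y') = f (e.symm ⟨a, ha⟩) := fun a ha =>
    (hg _).symm ▸ rfl
  refine ⟨g, fun a ha => ?_, ?_⟩
  · have := hfC _ (show e.symm ⟨a, subset_affineSpan ℝ K ha⟩ ∈ C by simpa [C, e] using ha)
    rw [← hgf x hxK, ← hgf a (subset_affineSpan ℝ K ha), map_sub, map_sub] at this
    linarith
  · rw [← hgf x hxK, map_sub, map_zero] at hf0
    linarith

namespace Eps

theorem root_pow (m : ℕ) : AdjoinRoot.root ((Polynomial.X : Polynomial ℝ) ^ m) ^ m = 0 := by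
  rw [← AdjoinRoot.mk_X, ← map_pow, AdjoinRoot.mk_self]

noncomputable def rescale (m : ℕ) (c : ℝ) : Eps m →ₐ[ℝ] Eps m :=
  AdjoinRoot.liftAlgHom _ (Algebra.ofId ℝ (Eps m)) (c • AdjoinRoot.root _) <| by
    simp [_root_.smul_pow, root_pow]

@[simp]
theorem rescale_root (m : ℕ) (c : ℝ) :
    rescale m c (AdjoinRoot.root _) = c • AdjoinRoot.root ((Polynomial.X : Polynomial ℝ) ^ m) :=
  AdjoinRoot.liftAlgHom_root ..

end Eps

theorem smul_mem_tangentVectors {n : ℕ} {I : Ideal (MvPolynomial (Fin n) ℝ)} {P v : Fin n → ℝ}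
    (c : ℝ) (hv : v ∈ tangentVectors I P) : c • v ∈ tangentVectors I P := by
  obtain ⟨φ, hφ⟩ := hv
  refine ⟨(Eps.rescale 2 c).comp φ, fun i => ?_⟩
  simp only [AlgHom.comp_apply, hφ i, map_add, AlgHom.commutes, map_smul, Eps.rescale_root,
    smul_smul, Pi.smul_apply, smul_eq_mul, mul_comm]

theorem LinearMap.pi_apply_eq_sum_univ_single {ι R M : Type*} [Fintype ι] [DecidableEq ι]
    [CommSemiring R] [AddCommMonoid M] [Module R M] (f : (ι → R) →ₗ[R] M) (x : ι → R) :
    f x = ∑ i, x i • f (Pi.single i 1) := by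
  conv_lhs => rw [← Finset.univ_sum_single x, map_sum]
  simp_rw [← map_smul, ← Pi.single_smul', smul_eq_mul, mul_one]

noncomputable def affinePolynomial {n : ℕ} (g : (Fin n → ℝ) →ₗ[ℝ] ℝ) (c : ℝ) :
    MvPolynomial (Fin n) ℝ :=
  ∑ i, MvPolynomial.C (g (Pi.single i 1)) * MvPolynomial.X i + MvPolynomial.C c

section affinePolynomial

variable {n : ℕ} (g : (Fin n → ℝ) →ₗ[ℝ] ℝ) (c : ℝ)

theorem totalDegree_affinePolynomial_le : (affinePolynomial g c).totalDegree ≤ 1 := by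
  refine (totalDegree_add _ _).trans (max_le ?_ (by simp))
  exact totalDegree_finsetSum_le fun i _ => (totalDegree_mul _ _).trans (by simp)

theorem eval_affinePolynomial (x : Fin n → ℝ) :
    MvPolynomial.eval x (affinePolynomial g c) = g x + c := by
  simp [affinePolynomial, g.pi_apply_eq_sum_univ_single x, mul_comm]

theorem linGrad_affinePolynomial (v : Fin n → ℝ) : linGrad (affinePolynomial g c) v = g v := by
  simp [linGrad, affinePolynomial, g.pi_apply_eq_sum_univ_single v, Pi.single_apply, mul_comm]

end affinePolynomial

theorem exists_separating_linear_of_convexSingular_general {n : ℕ}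
    (I : Ideal (MvPolynomial (Fin n) ℝ)) (P : Fin n → ℝ)
    (hcs : ConvexSingular I P) :
    ∃ f : MvPolynomial (Fin n) ℝ, f.totalDegree ≤ 1 ∧
      (∀ Q ∈ realVariety I, 0 ≤ MvPolynomial.eval Q f) ∧
      MvPolynomial.eval P f = 0 ∧
      (∃ v ∈ tangentVectors I P, linGrad f v ≠ 0) ∧
      ∃ v ∈ tangentVectors I P, linGrad f v < 0 := by
  obtain ⟨-, hPfr, v, hv, hPv⟩ := hcs
  set K := convexHull ℝ (realVariety I)
  have hPspan : P ∈ affineSpan ℝ K :=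
    intrinsicClosure_subset_affineSpan (intrinsicFrontier_subset_intrinsicClosure hPfr)
  have hPint : P ∉ intrinsicInterior ℝ K := by
    rw [← intrinsicClosure_sdiff_intrinsicInterior] at hPfr
    exact hPfr.2
  obtain ⟨g, hgK, hgP⟩ :=
    (convex_convexHull ℝ _).exists_forall_le_of_notMem_intrinsicInterior hPspan hPint hPv
  have hgv : 0 < g v := by rw [map_add] at hgP; linarith
  set f := affinePolynomial (g : (Fin n → ℝ) →ₗ[ℝ] ℝ) (-g P)
  refine ⟨f, totalDegree_affinePolynomial_le _ _, fun Q hQ => ?_, by simp [f, eval_affinePolynomial],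
    ⟨v, hv, ?_⟩, ⟨(-1 : ℝ) • v, smul_mem_tangentVectors _ hv, ?_⟩⟩
  · have := hgK Q (subset_convexHull ℝ _ hQ)
    simp only [f, eval_affinePolynomial, ContinuousLinearMap.coe_coe]
    linarith
  · simpa [f, linGrad_affinePolynomial] using hgv.ne'
  · simpa [f, linGrad_affinePolynomial] using hgv

/-- If `P ∈ V_ℝ(I)` is convex-singular, then there is a polynomial `f` of degree at most `1`
which is nonnegative on `V_ℝ(I)`, vanishes at `P`, and induces a nonzero linear function on
the tangent space of `V(I)` at `P`; in particular there is a tangent vector on which the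
linear part of `f` is negative. -/
theorem exists_separating_linear_of_convexSingular {n : ℕ}
    (I : Ideal (MvPolynomial (Fin n) ℝ)) (P : Fin n → ℝ) (hP : P ∈ realVariety I)
    (hcs : ConvexSingular I P) :
    ∃ f : MvPolynomial (Fin n) ℝ, f.totalDegree ≤ 1 ∧
      (∀ Q ∈ realVariety I, 0 ≤ MvPolynomial.eval Q f) ∧
      MvPolynomial.eval P f = 0 ∧
      (∃ v ∈ tangentVectors I P, linGrad f v ≠ 0) ∧
      ∃ v ∈ tangentVectors I P, linGrad f v < 0 :=
  exists_separating_linear_of_convexSingular_general I P hcs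
end

section
/- Let I ⊆ ℝ[x₁,…,xₙ] be an ideal, A = ℝ[x₁,…,xₙ]/I, P ∈ V_ℝ(I), and f ∈ A. If there exist m ≥ 1, an ℝ-algebra homomorphism φ : A → ℝ[ε]/(ε^m) at P, and an odd natural number N < m such that φ(f) = a_N ε^N + ⋯ + a_{m−1}ε^{m−1} with a_N ≠ 0 (i.e., the leading term of φ(f) occurs in odd degree), then f is not strongly nonnegative at P. -/
open MvPolynomial Polynomial

/-
Precomposing a homomorphism at `P` with the automorphism `ε ↦ -ε` of `ℝ[ε]/(ε^m)` gives another
homomorphism at `P`, and it multiplies the coefficient of `ε^N` by `(-1)^N`. For odd `N` the two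
leading coefficients have opposite signs, so one of the two images of `f` is not nonnegative.
-/

theorem Polynomial.coeff_comp_neg_X {R : Type*} [Ring R] (p : R[X]) (k : ℕ) :
    (p.comp (-X : R[X])).coeff k = (-1) ^ k * p.coeff k := by
  rw [show (-X : R[X]) = C (-1) * X by simp, comp_C_mul_X_coeff,
    ((Commute.neg_one_left _).pow_left k).eq]

namespace Eps

variable {m : ℕ}

theorem coeff_eq_of_mk_eq {p q : ℝ[X]} (h : (AdjoinRoot.mk _ p : Eps m) = AdjoinRoot.mk _ q)
    {d : ℕ} (hd : d < m) : p.coeff d = q.coeff d := by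
  rw [AdjoinRoot.mk_eq_mk, X_pow_dvd_iff] at h
  simpa [sub_eq_zero] using h d hd

theorem coeff_pos_of_epsNonneg_mk {q : ℝ[X]} {N : ℕ} (hNm : N < m)
    (hlow : ∀ j < N, q.coeff j = 0) (hN : q.coeff N ≠ 0)
    (hq : EpsNonneg (AdjoinRoot.mk _ q : Eps m)) : 0 < q.coeff N := by
  rcases hq with hzero | ⟨r, hr, hpos⟩
  · exact absurd (X_pow_dvd_iff.mp (AdjoinRoot.mk_eq_zero.mp hzero) N hNm) hN
  · have hagree (d : ℕ) (hd : d < m) : r.coeff d = q.coeff d := coeff_eq_of_mk_eq hr hd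
    have hrN : r.coeff N ≠ 0 := hagree N hNm ▸ hN
    have htrail : r.natTrailingDegree = N := by
      refine le_antisymm (natTrailingDegree_le_of_ne_zero hrN) (le_natTrailingDegree ?_ ?_)
      · rintro rfl
        exact hrN (coeff_zero N)
      · intro j hj
        rw [hagree j (hj.trans hNm), hlow j hj]
    rwa [htrail, hagree N hNm] at hpos

theorem root_pow_eq_zero : (AdjoinRoot.root _ : Eps m) ^ m = 0 := by
  simpa using AdjoinRoot.eval₂_root ((Polynomial.X : ℝ[X]) ^ m)

noncomputable def negEps (m : ℕ) : Eps m →ₐ[ℝ] Eps m :=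
  AdjoinRoot.liftAlgHom _ (Algebra.ofId ℝ _) (-AdjoinRoot.root _) <| by
    rw [Polynomial.eval₂_X_pow, neg_pow, root_pow_eq_zero, mul_zero]

theorem negEps_root : negEps m (AdjoinRoot.root _) = -AdjoinRoot.root _ :=
  AdjoinRoot.liftAlgHom_root ..

theorem negEps_mk (p : ℝ[X]) :
    negEps m (AdjoinRoot.mk _ p) = AdjoinRoot.mk _ (p.comp (-Polynomial.X)) := by
  rw [← AdjoinRoot.aeval_eq (p.comp _), aeval_comp, map_neg, Polynomial.aeval_X]
  exact AdjoinRoot.liftAlgHom_mk ..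

end Eps

theorem AtPoint.algHom_comp {n m : ℕ} {I : Ideal (MvPolynomial (Fin n) ℝ)} {P : Fin n → ℝ}
    {φ : (MvPolynomial (Fin n) ℝ ⧸ I) →ₐ[ℝ] Eps m} (hφ : AtPoint I P φ)
    {σ : Eps m →ₐ[ℝ] Eps m}
    (hσ : σ (AdjoinRoot.root _) ∈ Ideal.span {AdjoinRoot.root ((Polynomial.X : ℝ[X]) ^ m)}) :
    AtPoint I P (σ.comp φ) := by
  intro p
  have hmap := Ideal.mem_map_of_mem σ (hφ p)
  rw [map_sub, AlgHom.commutes, Ideal.map_span, Set.image_singleton] at hmap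
  exact Ideal.span_singleton_le_span_singleton.mpr (Ideal.mem_span_singleton.mp hσ) hmap

theorem not_stronglyNonnegAt_of_odd_leading_term_general {n : ℕ}
    (I : Ideal (MvPolynomial (Fin n) ℝ)) (P : Fin n → ℝ)
    (f : MvPolynomial (Fin n) ℝ) (m : ℕ)
    (φ : (MvPolynomial (Fin n) ℝ ⧸ I) →ₐ[ℝ] Eps m) (hφ : AtPoint I P φ)
    (N : ℕ) (hodd : Odd N) (hNm : N < m) (p : Polynomial ℝ)
    (hp : AdjoinRoot.mk ((Polynomial.X : Polynomial ℝ) ^ m) p = φ (Ideal.Quotient.mk I f))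
    (hlow : ∀ j < N, p.coeff j = 0) (hN : p.coeff N ≠ 0) :
    ¬ StronglyNonnegAt I P (Ideal.Quotient.mk I f) := by
  intro hf
  have hpos : 0 < p.coeff N := Eps.coeff_pos_of_epsNonneg_mk hNm hlow hN (hp ▸ hf m φ hφ)
  have hφ' : AtPoint I P ((Eps.negEps m).comp φ) :=
    hφ.algHom_comp (Eps.negEps_root ▸ neg_mem (Ideal.mem_span_singleton_self _))
  have hp' : (AdjoinRoot.mk _ (p.comp (-Polynomial.X)) : Eps m) =
      (Eps.negEps m).comp φ (Ideal.Quotient.mk I f) := by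
    rw [AlgHom.comp_apply, ← hp, Eps.negEps_mk]
  have hcoeff (j : ℕ) : (p.comp (-Polynomial.X)).coeff j = (-1) ^ j * p.coeff j :=
    coeff_comp_neg_X p j
  have hneg : 0 < (p.comp (-Polynomial.X)).coeff N :=
    Eps.coeff_pos_of_epsNonneg_mk hNm (fun j hj => by rw [hcoeff, hlow j hj, mul_zero])
      (by rw [hcoeff]; exact mul_ne_zero (pow_ne_zero _ (by norm_num)) hN) (hp' ▸ hf m _ hφ')
  rw [hcoeff, hodd.neg_one_pow, neg_one_mul] at hneg
  linarith

/-- If some homomorphism `φ : A → ℝ[ε]/(ε^m)` at `P` sends `f` to an element whose leading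
term occurs in odd degree `N < m`, then `f` is not strongly nonnegative at `P`. -/
theorem not_stronglyNonnegAt_of_odd_leading_term {n : ℕ}
    (I : Ideal (MvPolynomial (Fin n) ℝ)) (P : Fin n → ℝ) (hP : P ∈ realVariety I)
    (f : MvPolynomial (Fin n) ℝ) (m : ℕ) (hm : 1 ≤ m)
    (φ : (MvPolynomial (Fin n) ℝ ⧸ I) →ₐ[ℝ] Eps m) (hφ : AtPoint I P φ)
    (N : ℕ) (hodd : Odd N) (hNm : N < m) (p : Polynomial ℝ)
    (hp : AdjoinRoot.mk ((Polynomial.X : Polynomial ℝ) ^ m) p = φ (Ideal.Quotient.mk I f))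
    (hlow : ∀ j < N, p.coeff j = 0) (hN : p.coeff N ≠ 0) :
    ¬ StronglyNonnegAt I P (Ideal.Quotient.mk I f) :=
  not_stronglyNonnegAt_of_odd_leading_term_general I P f m φ hφ N hodd hNm p hp hlow hN
end
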